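/- Let n ≥ 1, 0 < α < n, r > 0, x ∈ ℝⁿ, and let f : ℝⁿ → [0,∞] be locally integrable. Then ∫_{B_r(x)} f(y)/|x−y|^{n−α} dy ≤ (2ⁿ·ω_n/(2^α − 1)) · r^α · Mf(x), where ω_n is the Lebesgue measure of the unit ball in ℝⁿ and Mf is the centred Hardy–Littlewood maximal function of f. -/

import Mathlib

/-! Split the punctured ball `B_r(x) \ {x}` into the dyadic annuli
`B_{r/2^k}(x) \ B_{r/2^(k+1)}(x)`. On the `k`-th annulus the kernel `|x - y|^(α - n)` is at
most `(r/2^(k+1))^(α - n)`, while `∫_{B_{r/2^k}(x)} f ≤ ω_n (r/2^k)^n Mf(x)`; so that annulus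
contributes at most `2^(n-α) ω_n (r/2^k)^α Mf(x)`, and summing the geometric series in `k` gives
`2^n ω_n r^α Mf(x) / (2^α - 1)`. -/

open MeasureTheory

/-- The centred Hardy–Littlewood maximal function of `f : ℝⁿ → [0,∞]`. -/
noncomputable def centredMaximal (n : ℕ) (f : EuclideanSpace ℝ (Fin n) → ENNReal)
    (x : EuclideanSpace ℝ (Fin n)) : ENNReal :=
  ⨆ (ρ : ℝ) (_ : 0 < ρ),
    (∫⁻ y in Metric.ball x ρ, f y) / volume (Metric.ball x ρ)

open Metric

theorem hasSum_div_two_pow_rpow {r α : ℝ} (hr : 0 ≤ r) (hα : 0 < α) :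
    HasSum (fun k : ℕ => (r / 2 ^ k) ^ α) (2 ^ α / (2 ^ α - 1) * r ^ α) := by
  have h2α : 1 < (2 : ℝ) ^ α := Real.one_lt_rpow one_lt_two hα
  have hterm : ∀ k : ℕ, (r / 2 ^ k) ^ α = r ^ α * ((2 ^ α)⁻¹) ^ k := fun k => by
    rw [Real.div_rpow hr (by positivity), ← Real.rpow_pow_comm zero_le_two, div_eq_mul_inv,
      inv_pow]
  have hsum : r ^ α * (1 - (2 ^ α)⁻¹)⁻¹ = 2 ^ α / (2 ^ α - 1) * r ^ α := by
    have : (2 : ℝ) ^ α - 1 ≠ 0 := by linarith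
    field_simp
  simp only [hterm, ← hsum]
  exact (hasSum_geometric_of_lt_one (by positivity) (inv_lt_one_of_one_lt₀ h2α)).mul_left _

theorem Metric.ball_diff_singleton_subset_iUnion_annuli {X : Type*} [MetricSpace X] (x : X)
    {r : ℝ} (hr : 0 < r) :
    ball x r \ {x} ⊆ ⋃ k : ℕ, ball x (r / 2 ^ k) \ ball x (r / 2 ^ k / 2) := by
  rintro y ⟨hyr, hyx⟩
  have hy : 0 < dist y x := dist_pos.2 hyx
  have hex : ∃ k : ℕ, r / 2 ^ k ≤ dist y x := by
    obtain ⟨k, hk⟩ := exists_pow_lt_of_lt_one (div_pos hy hr) (by norm_num : (2 : ℝ)⁻¹ < 1)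
    refine ⟨k, ?_⟩
    rw [inv_pow, ← one_div, div_lt_div_iff₀ (by positivity) hr] at hk
    rw [div_le_iff₀ (by positivity)]
    linarith
  obtain ⟨k, hk⟩ : ∃ k, Nat.find hex = k + 1 :=
    Nat.exists_eq_add_one.2 <| Nat.pos_of_ne_zero fun h0 => by
      have := Nat.find_spec hex
      rw [h0, pow_zero, div_one] at this
      exact (mem_ball.1 hyr).not_ge this
  refine Set.mem_iUnion.2 ⟨k, mem_ball.2 ?_, fun h => (mem_ball.1 h).not_ge ?_⟩
  · exact not_le.1 (Nat.find_min hex (hk ▸ k.lt_succ_self))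
  · simpa [hk, pow_succ, div_div] using Nat.find_spec hex

section DyadicAnnuli

variable {X : Type*} [MetricSpace X] [MeasurableSpace X] [OpensMeasurableSpace X]
  {μ : Measure X} {f : X → ENNReal} {x : X} {d α : ℝ} {K : ENNReal}

theorem setLIntegral_annulus_div_dist_rpow_le {ρ : ℝ} (hρ : 0 < ρ) (hαd : α ≤ d)
    (hball : ∫⁻ y in ball x ρ, f y ∂μ ≤ ENNReal.ofReal (ρ ^ d) * K) :
    ∫⁻ y in ball x ρ \ ball x (ρ / 2), f y / ENNReal.ofReal (dist x y ^ (d - α)) ∂μ ≤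
      ENNReal.ofReal (2 ^ (d - α) * ρ ^ α) * K := by
  have hρ2 : 0 < (ρ / 2) ^ (d - α) := Real.rpow_pos_of_pos (by positivity) _
  set c := (ENNReal.ofReal ((ρ / 2) ^ (d - α)))⁻¹
  have hkernel : ∀ y ∈ ball x ρ \ ball x (ρ / 2),
      f y / ENNReal.ofReal (dist x y ^ (d - α)) ≤ f y * c := by
    rintro y ⟨-, hy⟩
    have hdist : ρ / 2 ≤ dist x y := by simpa [dist_comm] using hy
    rw [div_eq_mul_inv]
    gcongr
    exact ENNReal.inv_le_inv.2 <| ENNReal.ofReal_le_ofReal <|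
      Real.rpow_le_rpow (by positivity) hdist (sub_nonneg.2 hαd)
  have hscale : ρ ^ d / (ρ / 2) ^ (d - α) = 2 ^ (d - α) * ρ ^ α := by
    have : 0 < ρ ^ α := Real.rpow_pos_of_pos hρ α
    rw [Real.div_rpow hρ.le zero_le_two, Real.rpow_sub hρ]
    field_simp
  calc ∫⁻ y in ball x ρ \ ball x (ρ / 2), f y / ENNReal.ofReal (dist x y ^ (d - α)) ∂μ
      ≤ ∫⁻ y in ball x ρ \ ball x (ρ / 2), f y * c ∂μ :=
        setLIntegral_mono' (measurableSet_ball.diff measurableSet_ball) hkernel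
    _ = (∫⁻ y in ball x ρ \ ball x (ρ / 2), f y ∂μ) * c :=
        lintegral_mul_const' _ _ (ENNReal.inv_ne_top.2 (ENNReal.ofReal_pos.2 hρ2).ne')
    _ ≤ ENNReal.ofReal (ρ ^ d) * K * c := by
        gcongr
        exact (lintegral_mono_set Set.sdiff_subset).trans hball
    _ = ENNReal.ofReal (2 ^ (d - α) * ρ ^ α) * K := by
        rw [← hscale, ENNReal.ofReal_div_of_pos hρ2, div_eq_mul_inv, mul_right_comm]

theorem setLIntegral_ball_div_dist_rpow_le [NullSingletonClass μ] {r : ℝ} (hr : 0 < r)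
    (hα : 0 < α) (hαd : α ≤ d)
    (hball : ∀ ρ, 0 < ρ → ∫⁻ y in ball x ρ, f y ∂μ ≤ ENNReal.ofReal (ρ ^ d) * K) :
    ∫⁻ y in ball x r, f y / ENNReal.ofReal (dist x y ^ (d - α)) ∂μ ≤
      ENNReal.ofReal (2 ^ d / (2 ^ α - 1) * r ^ α) * K := by
  set g := fun y => f y / ENNReal.ofReal (dist x y ^ (d - α))
  have hsum := (hasSum_div_two_pow_rpow hr.le hα).mul_left (2 ^ (d - α))
  have hconst :
      (2 : ℝ) ^ (d - α) * (2 ^ α / (2 ^ α - 1) * r ^ α) = 2 ^ d / (2 ^ α - 1) * r ^ α := by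
    rw [Real.rpow_sub zero_lt_two]
    field_simp
  calc ∫⁻ y in ball x r, g y ∂μ = ∫⁻ y in ball x r \ {x}, g y ∂μ :=
        setLIntegral_congr (sdiff_null_ae_eq_self (measure_singleton x)).symm
    _ ≤ ∫⁻ y in ⋃ k : ℕ, ball x (r / 2 ^ k) \ ball x (r / 2 ^ k / 2), g y ∂μ :=
        lintegral_mono_set (ball_diff_singleton_subset_iUnion_annuli x hr)
    _ ≤ ∑' k : ℕ, ∫⁻ y in ball x (r / 2 ^ k) \ ball x (r / 2 ^ k / 2), g y ∂μ :=
        lintegral_iUnion_le _ _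
    _ ≤ ∑' k : ℕ, ENNReal.ofReal (2 ^ (d - α) * (r / 2 ^ k) ^ α) * K :=
        ENNReal.tsum_le_tsum fun k =>
          setLIntegral_annulus_div_dist_rpow_le (by positivity) hαd (hball _ (by positivity))
    _ = ENNReal.ofReal (2 ^ d / (2 ^ α - 1) * r ^ α) * K := by
        rw [ENNReal.tsum_mul_right, ← ENNReal.ofReal_tsum_of_nonneg (fun _ => by positivity)
          hsum.summable, hsum.tsum_eq, hconst]

end DyadicAnnuli

theorem setLIntegral_ball_le_volume_mul_centredMaximal {n : ℕ}
    (f : EuclideanSpace ℝ (Fin n) → ENNReal) (x : EuclideanSpace ℝ (Fin n)) {ρ : ℝ}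
    (hρ : 0 < ρ) :
    ∫⁻ y in ball x ρ, f y ≤ volume (ball x ρ) * centredMaximal n f x := by
  rw [mul_comm, ← ENNReal.div_le_iff (measure_ball_pos volume x hρ).ne' measure_ball_lt_top.ne]
  exact le_iSup₂ (f := fun ρ (_ : 0 < ρ) => (∫⁻ y in ball x ρ, f y) / volume (ball x ρ))
    ρ hρ

theorem stmt1_general (n : ℕ) (α r : ℝ) (hα : 0 < α) (hαn : α < n) (hr : 0 < r)
    (x : EuclideanSpace ℝ (Fin n)) (f : EuclideanSpace ℝ (Fin n) → ENNReal) :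
    ∫⁻ y in Metric.ball x r, f y / ENNReal.ofReal (dist x y ^ ((n : ℝ) - α)) ≤
      (2 ^ n * volume (Metric.ball (0 : EuclideanSpace ℝ (Fin n)) 1)
          / ENNReal.ofReal ((2 : ℝ) ^ α - 1))
        * ENNReal.ofReal (r ^ α) * centredMaximal n f x := by
  -- `volume` has no atoms only in positive dimension
  have : Nonempty (Fin n) := ⟨⟨0, by exact_mod_cast hα.trans hαn⟩⟩
  set ω := volume (ball (0 : EuclideanSpace ℝ (Fin n)) 1)
  set M := centredMaximal n f x
  have hball :
      ∀ ρ, 0 < ρ → ∫⁻ y in ball x ρ, f y ≤ ENNReal.ofReal (ρ ^ (n : ℝ)) * (ω * M) := by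
    intro ρ hρ
    have := setLIntegral_ball_le_volume_mul_centredMaximal f x hρ
    rwa [Measure.addHaar_ball_of_pos volume x hρ, finrank_euclideanSpace_fin, mul_assoc,
      ← Real.rpow_natCast] at this
  have h2α : 0 < (2 : ℝ) ^ α - 1 := sub_pos.2 (Real.one_lt_rpow one_lt_two hα)
  calc _ ≤ ENNReal.ofReal (2 ^ (n : ℝ) / (2 ^ α - 1) * r ^ α) * (ω * M) :=
        setLIntegral_ball_div_dist_rpow_le hr hα hαn.le hball
    _ = _ := by
        rw [ENNReal.ofReal_mul (by positivity), ENNReal.ofReal_div_of_pos h2α, Real.rpow_natCast,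
          ENNReal.ofReal_pow zero_le_two, ENNReal.ofReal_ofNat]
        simp only [div_eq_mul_inv]
        ring

theorem stmt1 (n : ℕ) (hn : 1 ≤ n) (α r : ℝ) (hα : 0 < α) (hαn : α < n) (hr : 0 < r)
    (x : EuclideanSpace ℝ (Fin n)) (f : EuclideanSpace ℝ (Fin n) → ENNReal)
    (hmeas : Measurable f)
    (hf : LocallyIntegrable (fun y => (f y).toReal) volume) :
    ∫⁻ y in Metric.ball x r, f y / ENNReal.ofReal (dist x y ^ ((n : ℝ) - α)) ≤
      (2 ^ n * volume (Metric.ball (0 : EuclideanSpace ℝ (Fin n)) 1)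
          / ENNReal.ofReal ((2 : ℝ) ^ α - 1))
        * ENNReal.ofReal (r ^ α) * centredMaximal n f x :=
  stmt1_general n α r hα hαn hr x f
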